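/- Let L ≥ 1, let b : ℤ → ℝ be L-periodic with period sum C = ∑_{i=0}^{L-1} b(i), and let E : ℤ → ℝ. Suppose there exists i₀ ∈ ℤ with E(i) = b(i) for all i ≤ i₀ (initial stillness), and suppose W_E(n) = C for every n ≤ j₁. Then E(i) = b(i) for every i ≤ j₁ + L − 1; that is, any deviation of E from the baseline (motion onset) occurs no earlier than spoke index j₁ + L. -/

import Mathlib

/-- Window-summed spoke energy: `W L E n = ∑_{i=0}^{L-1} E (n+i)`. -/
def windowSum (L : ℕ) (E : ℤ → ℝ) (n : ℤ) : ℝ :=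
  ∑ i ∈ Finset.range L, E (n + i)

/-!
Consecutive windows differ by `E (n + L) - E n`, so a window sum that is constant up to `j₁`
makes `E` invariant under the shift by `L` below `j₁ + L`. The baseline is invariant under the
same shift everywhere, and the two agree far to the left; stepping to the right one period at a
time, they agree up to `j₁ + L - 1`.
-/

theorem windowSum_add_one (L : ℕ) (E : ℤ → ℝ) (n : ℤ) :
    windowSum L E (n + 1) + E n = windowSum L E n + E (n + L) := by
  unfold windowSum
  have hshift := Finset.sum_range_succ' (fun i : ℕ => E (n + i)) L
  rw [Finset.sum_range_succ] at hshift
  push_cast at hshift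
  simp only [add_zero, ← add_assoc, add_right_comm n _ 1] at hshift
  linarith

theorem add_eq_of_windowSum_add_one_eq {L : ℕ} {E : ℤ → ℝ} {n : ℤ}
    (h : windowSum L E (n + 1) = windowSum L E n) : E (n + L) = E n := by
  linarith [windowSum_add_one L E n]

theorem eq_of_shift_invariant_of_agree_le {α : Type*} {L : ℤ} (hL : 0 < L) {f g : ℤ → α}
    {i₀ m : ℤ} (hf : ∀ i, i + L ≤ m → f (i + L) = f i) (hg : ∀ i, i + L ≤ m → g (i + L) = g i)
    (hfg : ∀ i, i ≤ i₀ → f i = g i) : ∀ i, i ≤ m → f i = g i := by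
  have agree_upto : ∀ k : ℕ, ∀ i, i ≤ m → i ≤ i₀ + k → f i = g i := by
    intro k
    induction k with
    | zero => intro i _ hi; exact hfg i (by simpa using hi)
    | succ k ih =>
      intro i him hik
      by_cases hprev : i ≤ i₀ + k
      · exact ih i him hprev
      · have hback : i - L + L = i := sub_add_cancel i L
        rw [← hback, hf _ (by omega), hg _ (by omega), ih _ (by omega) (by omega)]
  intro i hi
  exact agree_upto (i - i₀).toNat i hi (by omega)

theorem motion_onset_no_earlier_general
    (L : ℕ) (hL : 1 ≤ L)
    (b : ℤ → ℝ) (hb : ∀ i : ℤ, b (i + L) = b i)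
    (C : ℝ)
    (E : ℤ → ℝ)
    (i₀ : ℤ) (hstill : ∀ i : ℤ, i ≤ i₀ → E i = b i)
    (j₁ : ℤ) (hW : ∀ n : ℤ, n ≤ j₁ → windowSum L E n = C) :
    ∀ i : ℤ, i ≤ j₁ + L - 1 → E i = b i := by
  have hE : ∀ i : ℤ, i + L ≤ j₁ + L - 1 → E (i + L) = E i := fun i hi =>
    add_eq_of_windowSum_add_one_eq (by rw [hW (i + 1) (by omega), hW i (by omega)])
  exact eq_of_shift_invariant_of_agree_le (by omega) hE (fun i _ => hb i) hstill

/-- if the subject is initially still and the window-summed spoke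
energy equals the baseline value `C` for all window indices `n ≤ j₁`, then the
spoke energy equals the baseline for all spoke indices `i ≤ j₁ + L - 1`;
i.e., motion onset occurs no earlier than spoke index `j₁ + L`. -/
theorem motion_onset_no_earlier
    (L : ℕ) (hL : 1 ≤ L)
    (b : ℤ → ℝ) (hb : ∀ i : ℤ, b (i + L) = b i)
    (C : ℝ) (hC : C = ∑ i ∈ Finset.range L, b i)
    (E : ℤ → ℝ)
    (i₀ : ℤ) (hstill : ∀ i : ℤ, i ≤ i₀ → E i = b i)
    (j₁ : ℤ) (hW : ∀ n : ℤ, n ≤ j₁ → windowSum L E n = C) :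
    ∀ i : ℤ, i ≤ j₁ + L - 1 → E i = b i :=
  motion_onset_no_earlier_general L hL b hb C E i₀ hstill j₁ hW
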